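/- Let Γ and H be groups, let (X, μ) be a measure space on which Γ acts so that for each γ ∈ Γ the map x ↦ γ • x is measurable and measure-preserving, and let σ : Γ × X → H satisfy the cocycle identity σ(γ₁ * γ₂, x) = σ(γ₁, γ₂ • x) * σ(γ₂, x) for all γ₁, γ₂ ∈ Γ and all x ∈ X. Let ε : H →* ℝˣ be a group homomorphism with ε(σ(γ, x)) = 1 for all γ ∈ Γ and x ∈ X, let n ∈ ℕ, and let ψ : (Fin (n+1) → H) → ℝ be ε-equivariant for the left translation action: ψ(fun i => h * v i) = (ε h : ℝ) * ψ(v) for all h ∈ H and all v : Fin (n+1) → H. Assume that for every tuple γ : Fin (n+1) → Γ the function x ↦ ψ(fun i => (σ((γ i)⁻¹, x))⁻¹) is integrable. Then the cochain C_b(σ)(ψ)(γ) := ∫_X ψ(fun i => (σ((γ i)⁻¹, x))⁻¹) dμ(x) is Γ-invariant: for all γ₀ ∈ Γ and all γ : Fin (n+1) → Γ, C_b(σ)(ψ)(fun i => γ₀ * γ i) = C_b(σ)(ψ)(γ). -/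
import Mathlib


open MeasureTheory

/-- the pullback cochain
`C_b(σ)(ψ)(γ₀, …, γₙ) = ∫_X ψ(σ(γ₀⁻¹, x)⁻¹, …, σ(γₙ⁻¹, x)⁻¹) dμ(x)` of an
`ε`-equivariant cochain `ψ` along a measurable cocycle `σ` with values in `ker ε` is
`Γ`-invariant. -/
theorem cochain_pullback_invariant {Γ H X : Type*} [Group Γ] [Group H]
    [MulAction Γ X] [MeasurableSpace X] (μ : Measure X)
    (hmp : ∀ γ : Γ, MeasurePreserving (fun x : X => γ • x) μ μ)
    (σ : Γ × X → H)
    (hσ : ∀ (γ₁ γ₂ : Γ) (x : X), σ (γ₁ * γ₂, x) = σ (γ₁, γ₂ • x) * σ (γ₂, x))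
    (ε : H →* ℝˣ) (hεσ : ∀ (γ : Γ) (x : X), ε (σ (γ, x)) = 1)
    (n : ℕ) (ψ : (Fin (n + 1) → H) → ℝ)
    (hψ : ∀ (h : H) (v : Fin (n + 1) → H), ψ (fun i => h * v i) = (ε h : ℝ) * ψ v)
    (hint : ∀ γ : Fin (n + 1) → Γ,
      Integrable (fun x => ψ (fun i => (σ ((γ i)⁻¹, x))⁻¹)) μ) :
    ∀ (γ₀ : Γ) (γ : Fin (n + 1) → Γ),
      ∫ x, ψ (fun i => (σ ((γ₀ * γ i)⁻¹, x))⁻¹) ∂μ =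
        ∫ x, ψ (fun i => (σ ((γ i)⁻¹, x))⁻¹) ∂μ := by
  intro γ₀ γ
  have key : ∀ x : X,
      ψ (fun i => (σ ((γ₀ * γ i)⁻¹, x))⁻¹)
        = ψ (fun i => (σ ((γ i)⁻¹, γ₀⁻¹ • x))⁻¹) := by
    intro x
    have h1 : ∀ i : Fin (n + 1),
        (σ ((γ₀ * γ i)⁻¹, x))⁻¹
          = (σ (γ₀⁻¹, x))⁻¹ * (σ ((γ i)⁻¹, γ₀⁻¹ • x))⁻¹ := by
      intro i
      rw [mul_inv_rev, hσ (γ i)⁻¹ γ₀⁻¹ x, mul_inv_rev]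
    simp only [h1]
    rw [hψ, map_inv, hεσ]
    simp
  simp only [key]
  -- change of variables along the measure-preserving map x ↦ γ₀⁻¹ • x
  let e : X ≃ᵐ X :=
    { toFun := fun x => γ₀⁻¹ • x
      invFun := fun x => γ₀ • x
      left_inv := fun x => by simp
      right_inv := fun x => by simp
      measurable_toFun := (hmp γ₀⁻¹).measurable
      measurable_invFun := (hmp γ₀).measurable }
  exact (hmp γ₀⁻¹).integral_comp e.measurableEmbedding
    (fun x => ψ (fun i => (σ ((γ i)⁻¹, x))⁻¹))
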